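/- Let a, b, a', b', a'', b'' ∈ [0,1]. There exist t ∈ [0,1] and distributions P, P', P'' on (ZMod 2)^2 with (d₂P, d₁P, d₀P) = (a, b, t), (d₂P', d₁P', d₀P') = (a', b', t), and (d₂P'', d₁P'', d₀P'') = (a'', b'', t) if and only if each of the three pairs (a,b),(a',b'); (a,b),(a'',b''); and (a',b'),(a'',b'') satisfies the four CHSH inequalities 0 ≤ u + v + u' − v' ≤ 2, 0 ≤ u + v − u' + v' ≤ 2, 0 ≤ u − v + u' + v' ≤ 2, 0 ≤ −u + v + u' + v' ≤ 2 (with (u,v) and (u',v') the two pairs in question). This says that a simplicial probability distribution on the boundary of the space obtained by gluing two diamonds along a 2-simplex extends to the whole space precisely when the CHSH inequalities hold for all three diamonds it contains. -/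

import Mathlib

/-!
A distribution `p` on `(ZMod 2)²` has `d₂p + d₁p - 1 = p 0 0 - p 1 0` and
`d₂p - d₁p = p 0 1 - p 1 1`, so its marginals satisfy
`|d₂p + d₁p - 1| ≤ d₀p ≤ 1 - |d₂p - d₁p|`; conversely every such triple is realised, with
`p 0 0 = (d₂p + d₁p + d₀p - 1) / 2`. The three triangles therefore extend iff three intervals
of possible values of `t` have a common point, i.e. (by Helly's theorem on the line) iff they
meet pairwise. Each interval is nonempty because `a, b, … ∈ [0,1]`, and the four CHSH
inequalities for two pairs say exactly that their two intervals meet.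
-/

open Finset

/-- A distribution on `(ZMod 2)²`: nonnegative with total mass 1. -/
def IsDist2 (p : ZMod 2 → ZMod 2 → ℝ) : Prop :=
  (∀ a b, 0 ≤ p a b) ∧ (∑ a : ZMod 2, ∑ b : ZMod 2, p a b = 1)

/-- The `d₀` edge marginal (at outcome `0`) of a distribution on a triangle. -/
def faceD0 (p : ZMod 2 → ZMod 2 → ℝ) : ℝ := p 0 0 + p 1 0

/-- The `d₁` edge marginal (at outcome `0`) of a distribution on a triangle. -/
def faceD1 (p : ZMod 2 → ZMod 2 → ℝ) : ℝ := p 0 0 + p 1 1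

/-- The `d₂` edge marginal (at outcome `0`) of a distribution on a triangle. -/
def faceD2 (p : ZMod 2 → ZMod 2 → ℝ) : ℝ := p 0 0 + p 0 1

/-- The four CHSH inequalities for the pair of pairs `(u, v)` and `(u', v')`. -/
def CHSHIneqs (u v u' v' : ℝ) : Prop :=
  (0 ≤ u + v + u' - v' ∧ u + v + u' - v' ≤ 2) ∧
  (0 ≤ u + v - u' + v' ∧ u + v - u' + v' ≤ 2) ∧
  (0 ≤ u - v + u' + v' ∧ u - v + u' + v' ≤ 2) ∧
  (0 ≤ -u + v + u' + v' ∧ -u + v + u' + v' ≤ 2)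

open Set

theorem isDist2_iff (p : ZMod 2 → ZMod 2 → ℝ) :
    IsDist2 p ↔ (0 ≤ p 0 0 ∧ 0 ≤ p 0 1 ∧ 0 ≤ p 1 0 ∧ 0 ≤ p 1 1) ∧
      p 0 0 + p 0 1 + (p 1 0 + p 1 1) = 1 := by
  have hsum (f : ZMod 2 → ℝ) : ∑ x, f x = f 0 + f 1 := Fin.sum_univ_two f
  have hall (q : ZMod 2 → Prop) : (∀ x, q x) ↔ q 0 ∧ q 1 := Fin.forall_fin_two
  simp only [IsDist2, hsum, hall, and_assoc]

theorem faceD0_mem_Icc {p : ZMod 2 → ZMod 2 → ℝ} (hp : IsDist2 p) :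
    faceD0 p ∈ Icc |faceD2 p + faceD1 p - 1| (1 - |faceD2 p - faceD1 p|) := by
  obtain ⟨⟨h00, h01, h10, h11⟩, hsum⟩ := (isDist2_iff p).1 hp
  simp only [faceD0, faceD1, faceD2, Set.mem_Icc]
  refine ⟨abs_le.2 ⟨?_, ?_⟩, le_sub_comm.1 (abs_le.2 ⟨?_, ?_⟩)⟩ <;> linarith

theorem exists_isDist2_faces {a b t : ℝ} (ht : t ∈ Icc |a + b - 1| (1 - |a - b|)) :
    ∃ p : ZMod 2 → ZMod 2 → ℝ, IsDist2 p ∧ faceD2 p = a ∧ faceD1 p = b ∧ faceD0 p = t := by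
  obtain ⟨hl₁, hl₂⟩ := abs_le.1 ht.1
  obtain ⟨hu₁, hu₂⟩ := abs_le.1 (le_sub_comm.1 ht.2)
  set x := (a + b + t - 1) / 2 with hx
  refine ⟨fun i j => if i = 0 then (if j = 0 then x else a - x)
    else (if j = 0 then t - x else b - x), ?_, ?_, ?_, ?_⟩
  · rw [isDist2_iff]
    simp only [if_pos, one_ne_zero, if_false]
    refine ⟨⟨?_, ?_, ?_, ?_⟩, ?_⟩ <;> linarith
  all_goals simp only [faceD0, faceD1, faceD2, if_pos, one_ne_zero, if_false]; ring

theorem abs_le_sub_abs_iff {x y c : ℝ} :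
    |x| ≤ c - |y| ↔ x + y ≤ c ∧ x - y ≤ c ∧ -x + y ≤ c ∧ -x - y ≤ c := by
  constructor
  · intro h
    refine ⟨?_, ?_, ?_, ?_⟩ <;> linarith [le_abs_self x, neg_abs_le x, le_abs_self y, neg_abs_le y]
  · rintro ⟨h₁, h₂, h₃, h₄⟩
    rcases abs_cases x with ⟨hx, -⟩ | ⟨hx, -⟩ <;> rcases abs_cases y with ⟨hy, -⟩ | ⟨hy, -⟩ <;>
      linarith

theorem chshIneqs_iff (u v u' v' : ℝ) :
    CHSHIneqs u v u' v' ↔ |u + v - 1| ≤ 1 - |u' - v'| ∧ |u' + v' - 1| ≤ 1 - |u - v| := by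
  rw [abs_le_sub_abs_iff, abs_le_sub_abs_iff, CHSHIneqs]
  constructor
  · rintro ⟨⟨h₁, h₂⟩, ⟨h₃, h₄⟩, ⟨h₅, h₆⟩, h₇, h₈⟩
    refine ⟨⟨?_, ?_, ?_, ?_⟩, ?_, ?_, ?_, ?_⟩ <;> linarith
  · rintro ⟨⟨h₁, h₂, h₃, h₄⟩, h₅, h₆, h₇, h₈⟩
    refine ⟨⟨?_, ?_⟩, ⟨?_, ?_⟩, ⟨?_, ?_⟩, ?_, ?_⟩ <;> linarith

theorem abs_add_sub_one_le_one_sub_abs_sub {u v : ℝ} (hu : u ∈ Icc (0 : ℝ) 1)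
    (hv : v ∈ Icc (0 : ℝ) 1) : |u + v - 1| ≤ 1 - |u - v| := by
  obtain ⟨hu₀, hu₁⟩ := hu
  obtain ⟨hv₀, hv₁⟩ := hv
  rw [abs_le_sub_abs_iff]
  refine ⟨?_, ?_, ?_, ?_⟩ <;> linarith

theorem Set.Icc_inter_Icc_inter_Icc_nonempty_iff {α : Type*} [LinearOrder α]
    {l₁ u₁ l₂ u₂ l₃ u₃ : α} :
    (Icc l₁ u₁ ∩ Icc l₂ u₂ ∩ Icc l₃ u₃).Nonempty ↔ (l₁ ≤ u₁ ∧ l₂ ≤ u₂ ∧ l₃ ≤ u₃) ∧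
      (l₁ ≤ u₂ ∧ l₂ ≤ u₁) ∧ (l₁ ≤ u₃ ∧ l₃ ≤ u₁) ∧ (l₂ ≤ u₃ ∧ l₃ ≤ u₂) := by
  rw [Icc_inter_Icc, Icc_inter_Icc, nonempty_Icc]
  simp only [max_le_iff, le_min_iff]
  tauto

/-- **Extension to two diamonds glued along a 2-simplex.**
For `a, b, a', b', a'', b'' ∈ [0,1]`: there is a common value `t ∈ [0,1]` and three
distributions on `(ZMod 2)²` with data `(d₂, d₁, d₀) = (a, b, t)`, `(a', b', t)`,
`(a'', b'', t)` iff each of the three pairs of pairs satisfies the CHSH inequalities. -/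
theorem two_diamonds_extension_iff_three_CHSH (a b a' b' a'' b'' : ℝ)
    (ha : a ∈ Set.Icc (0 : ℝ) 1) (hb : b ∈ Set.Icc (0 : ℝ) 1)
    (ha' : a' ∈ Set.Icc (0 : ℝ) 1) (hb' : b' ∈ Set.Icc (0 : ℝ) 1)
    (ha'' : a'' ∈ Set.Icc (0 : ℝ) 1) (hb'' : b'' ∈ Set.Icc (0 : ℝ) 1) :
    (∃ t ∈ Set.Icc (0 : ℝ) 1, ∃ P P' P'' : ZMod 2 → ZMod 2 → ℝ,
      IsDist2 P ∧ IsDist2 P' ∧ IsDist2 P'' ∧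
      faceD2 P = a ∧ faceD1 P = b ∧ faceD0 P = t ∧
      faceD2 P' = a' ∧ faceD1 P' = b' ∧ faceD0 P' = t ∧
      faceD2 P'' = a'' ∧ faceD1 P'' = b'' ∧ faceD0 P'' = t) ↔
    (CHSHIneqs a b a' b' ∧ CHSHIneqs a b a'' b'' ∧ CHSHIneqs a' b' a'' b'') := by
  rw [chshIneqs_iff, chshIneqs_iff, chshIneqs_iff]
  refine Iff.trans ?_ (Set.Icc_inter_Icc_inter_Icc_nonempty_iff.trans (and_iff_right
    ⟨abs_add_sub_one_le_one_sub_abs_sub ha hb, abs_add_sub_one_le_one_sub_abs_sub ha' hb',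
      abs_add_sub_one_le_one_sub_abs_sub ha'' hb''⟩))
  constructor
  · rintro ⟨t, -, P, P', P'', hP, hP', hP'', rfl, rfl, rfl, rfl, rfl, h₀', rfl, rfl, h₀''⟩
    exact ⟨faceD0 P, ⟨faceD0_mem_Icc hP, h₀' ▸ faceD0_mem_Icc hP'⟩, h₀'' ▸ faceD0_mem_Icc hP''⟩
  · rintro ⟨t, ⟨ht, ht'⟩, ht''⟩
    obtain ⟨P, hP, h₂, h₁, h₀⟩ := exists_isDist2_faces ht
    obtain ⟨P', hP', h₂', h₁', h₀'⟩ := exists_isDist2_faces ht'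
    obtain ⟨P'', hP'', h₂'', h₁'', h₀''⟩ := exists_isDist2_faces ht''
    exact ⟨t, ⟨(abs_nonneg _).trans ht.1, ht.2.trans (sub_le_self _ (abs_nonneg _))⟩,
      P, P', P'', hP, hP', hP'', h₂, h₁, h₀, h₂', h₁', h₀', h₂'', h₁'', h₀''⟩
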